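/- Let ℓ ≤ m ≤ n be positive integers and let p(x) = (1+...+x^ℓ)(1+...+x^m) + x·(1+...+x^{ℓ+m})(1+...+x^{n-1}). Then the coefficients of p satisfy: the constant coefficient is 1; the coefficients increase by 2 in each step up to degree ℓ; thereafter they increase by 1 until degree m; they stay constant from degree m to degree n; and finally decrease by 1 in each step until the coefficient of x^{ℓ+m+n}, which is 1. -/

import Mathlib

/-!
Multiplying by `1 - x` telescopes each geometric sum, so `(1 - x) p` is a signed sum of four
shifted geometric sums:
`(1 - x) p = (1 + ⋯ + x^m) - x^{ℓ+1}(1 + ⋯ + x^m) + x(1 + ⋯ + x^{ℓ+m}) - x^{n+1}(1 + ⋯ + x^{ℓ+m})`.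
Its coefficients, which are the successive differences `c_k - c_{k-1}`, are therefore sums of four
interval indicators, and equal `2, 1, 0, -1` on the four ranges of the statement. The last
coefficient is `1` because the differences vanish beyond degree `ℓ + m + n + 1`, so the
coefficients of `p` are constant, hence `0`, from there on.
-/

open Polynomial

/-- The geometric sum polynomial `1 + x + ... + x^m` in `ℤ[x]`, interpreted as `0` if `m < 0`. -/
noncomputable def geom (m : ℤ) : Polynomial ℤ :=
  ∑ j ∈ Finset.range (m + 1).toNat, X ^ j

section OneSubX

variable {R : Type*} [Ring R]

theorem coeff_one_sub_X_mul_zero (p : R[X]) : ((1 - X) * p).coeff 0 = p.coeff 0 := by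
  simp [sub_mul]

theorem coeff_one_sub_X_mul_succ (p : R[X]) (k : ℕ) :
    ((1 - X) * p).coeff (k + 1) = p.coeff (k + 1) - p.coeff k := by
  simp [sub_mul]

theorem coeff_eq_zero_of_coeff_one_sub_X_mul_eq_zero (p : R[X]) (N : ℕ)
    (h : ∀ k, N < k → ((1 - X) * p).coeff k = 0) : p.coeff N = 0 := by
  have hconst : ∀ j, p.coeff (N + j) = p.coeff N := by
    intro j
    induction j with
    | zero => rfl
    | succ j ih =>
      have := h (N + j + 1) (by omega)
      rw [coeff_one_sub_X_mul_succ, sub_eq_zero] at this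
      rw [← add_assoc, this, ih]
  rw [← hconst (p.natDegree + 1)]
  exact coeff_eq_zero_of_natDegree_lt (by omega)

end OneSubX

theorem geom_natCast (a : ℕ) : geom a = ∑ j ∈ Finset.range (a + 1), X ^ j := by
  rw [geom, show ((a : ℤ) + 1).toNat = a + 1 by omega]

theorem geom_mul_one_sub_X (a : ℤ) : geom a * (1 - X) = 1 - X ^ (a + 1).toNat :=
  geom_sum_mul_neg _ _

theorem coeff_geom (b k : ℕ) : (geom b).coeff k = if k ≤ b then 1 else 0 := by
  simp [geom_natCast, coeff_X_pow]

theorem coeff_X_pow_mul_geom (a b k : ℕ) :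
    (X ^ a * geom b).coeff k = if a ≤ k ∧ k ≤ a + b then 1 else 0 := by
  rw [coeff_X_pow_mul', coeff_geom]
  split_ifs <;> omega

noncomputable def poincarePoly (ℓ m n : ℕ) : ℤ[X] :=
  geom (ℓ : ℤ) * geom (m : ℤ) + X * (geom ((ℓ : ℤ) + (m : ℤ)) * geom ((n : ℤ) - 1))

theorem one_sub_X_mul_poincarePoly (ℓ m n : ℕ) :
    (1 - X) * poincarePoly ℓ m n = X ^ 0 * geom m - X ^ (ℓ + 1) * geom m
      + X ^ 1 * geom (ℓ + m : ℕ) - X ^ (n + 1) * geom (ℓ + m : ℕ) := by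
  have hℓ := geom_mul_one_sub_X ℓ
  have hn := geom_mul_one_sub_X (n - 1)
  rw [show ((ℓ : ℤ) + 1).toNat = ℓ + 1 by omega] at hℓ
  rw [show ((n : ℤ) - 1 + 1).toNat = n by omega] at hn
  rw [poincarePoly, Nat.cast_add]
  linear_combination geom (m : ℤ) * hℓ + X * geom ((ℓ : ℤ) + m) * hn

theorem coeff_one_sub_X_mul_poincarePoly (ℓ m n k : ℕ) :
    ((1 - X) * poincarePoly ℓ m n).coeff k =
      (if k ≤ m then 1 else 0) - (if ℓ + 1 ≤ k ∧ k ≤ ℓ + m + 1 then 1 else 0)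
        + (if 1 ≤ k ∧ k ≤ ℓ + m + 1 then 1 else 0)
        - (if n + 1 ≤ k ∧ k ≤ ℓ + m + n + 1 then 1 else 0) := by
  simp only [one_sub_X_mul_poincarePoly, coeff_add, coeff_sub, coeff_X_pow_mul_geom]
  split_ifs <;> omega

theorem stmt3_general (ℓ m n : ℕ) (hlm : ℓ ≤ m) (hmn : m ≤ n)
    (p : Polynomial ℤ)
    (hp : p = geom (ℓ : ℤ) * geom (m : ℤ)
        + X * (geom ((ℓ : ℤ) + (m : ℤ)) * geom ((n : ℤ) - 1))) :
    p.coeff 0 = 1 ∧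
    (∀ i : ℕ, i < ℓ → p.coeff (i + 1) = p.coeff i + 2) ∧
    (∀ i : ℕ, ℓ ≤ i → i < m → p.coeff (i + 1) = p.coeff i + 1) ∧
    (∀ i : ℕ, m ≤ i → i < n → p.coeff (i + 1) = p.coeff i) ∧
    (∀ i : ℕ, n ≤ i → i < ℓ + m + n → p.coeff (i + 1) = p.coeff i - 1) ∧
    p.coeff (ℓ + m + n) = 1 := by
  obtain rfl : p = poincarePoly ℓ m n := hp
  have hdiff := coeff_one_sub_X_mul_poincarePoly ℓ m n
  have hstep (i : ℕ) : (poincarePoly ℓ m n).coeff (i + 1) =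
      (poincarePoly ℓ m n).coeff i + ((1 - X) * poincarePoly ℓ m n).coeff (i + 1) := by
    rw [coeff_one_sub_X_mul_succ]; ring
  have hvanish : (poincarePoly ℓ m n).coeff (ℓ + m + n + 1) = 0 :=
    coeff_eq_zero_of_coeff_one_sub_X_mul_eq_zero _ _ fun k hk => by
      rw [hdiff]; split_ifs <;> omega
  refine ⟨?_, fun i _ => ?_, fun i _ _ => ?_, fun i _ _ => ?_, fun i _ _ => ?_, ?top⟩
  case top =>
    have hlast := hstep (ℓ + m + n)
    rw [hvanish, hdiff] at hlast
    split_ifs at hlast <;> omega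
  · rw [← coeff_one_sub_X_mul_zero, hdiff]; simp
  all_goals rw [hstep, hdiff]; split_ifs <;> omega

theorem stmt3 (ℓ m n : ℕ) (hℓ : 1 ≤ ℓ) (hlm : ℓ ≤ m) (hmn : m ≤ n)
    (p : Polynomial ℤ)
    (hp : p = geom (ℓ : ℤ) * geom (m : ℤ)
        + X * (geom ((ℓ : ℤ) + (m : ℤ)) * geom ((n : ℤ) - 1))) :
    p.coeff 0 = 1 ∧
    (∀ i : ℕ, i < ℓ → p.coeff (i + 1) = p.coeff i + 2) ∧
    (∀ i : ℕ, ℓ ≤ i → i < m → p.coeff (i + 1) = p.coeff i + 1) ∧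
    (∀ i : ℕ, m ≤ i → i < n → p.coeff (i + 1) = p.coeff i) ∧
    (∀ i : ℕ, n ≤ i → i < ℓ + m + n → p.coeff (i + 1) = p.coeff i - 1) ∧
    p.coeff (ℓ + m + n) = 1 :=
  stmt3_general ℓ m n hlm hmn p hp
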